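/- If an RDF graph G is closed under the RDFS inference rules rdfs2 (domain), rdfs3 (range), rdfs7 (subproperty usage), and rdfs9 (subclass usage), then the canonical interpretation of G satisfies the corresponding RDFS semantic conditions: (i) whenever (c, rdfs:subClassOf, d) ∈ G with c, d in the class vocabulary of G, then c^C ⊆ d^C; (ii) whenever (p, rdfs:subPropertyOf, q) ∈ G with p, q in the property vocabulary of G, then p^P ⊆ q^P; (iii) whenever (p, rdfs:domain, c) ∈ G with p in the property vocabulary and c in the class vocabulary of G, then for every (s,o) ∈ p^P, s ∈ c^C; and (iv) whenever (p, rdfs:range, c) ∈ G with p in the property vocabulary and c in the class vocabulary of G, then for every (s,o) ∈ p^P, o ∈ c^C. -/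
import Mathlib


/-!
STATEMENT 2: If an RDF graph `G` is closed under the RDFS inference rules
rdfs2 (domain), rdfs3 (range), rdfs7 (subproperty usage), and rdfs9 (subclass
usage), then the canonical interpretation of `G` satisfies the corresponding
RDFS semantic conditions.
-/

/-- The class vocabulary of an RDF graph `G`. -/
def vocabC {N : Type*} (rdfType rdfsClass : N) (G : Set (N × N × N)) : Set N :=
  {c | ∃ s, (s, rdfType, c) ∈ G} ∪ {c | (c, rdfType, rdfsClass) ∈ G}

/-- The property vocabulary of an RDF graph `G`. -/
def vocabP {N : Type*} (rdfType rdfProperty : N) (G : Set (N × N × N)) : Set N :=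
  {p | ∃ s o, (s, p, o) ∈ G} ∪ {p | (p, rdfType, rdfProperty) ∈ G}

/-- Class extensions of the canonical interpretation of `G`. -/
def canonClassExt {N : Type*} (rdfType : N) (G : Set (N × N × N)) : N → Set N :=
  fun c => {s | (s, rdfType, c) ∈ G}

/-- Property extensions of the canonical interpretation of `G`. -/
def canonPropExt {N : Type*} (G : Set (N × N × N)) : N → Set (N × N) :=
  fun p => {so | (so.1, p, so.2) ∈ G}

theorem canonical_interpretation_rdfs_conditions {N : Type*}
    (rdfType rdfsClass rdfProperty subClassOf subPropertyOf rdfsDomain rdfsRange : N)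
    (G : Set (N × N × N))
    -- G is closed under rdfs2 (domain)
    (h2 : ∀ p c s o, (p, rdfsDomain, c) ∈ G → (s, p, o) ∈ G → (s, rdfType, c) ∈ G)
    -- G is closed under rdfs3 (range)
    (h3 : ∀ p c s o, (p, rdfsRange, c) ∈ G → (s, p, o) ∈ G → (o, rdfType, c) ∈ G)
    -- G is closed under rdfs7 (subproperty usage)
    (h7 : ∀ p q s o, (p, subPropertyOf, q) ∈ G → (s, p, o) ∈ G → (s, q, o) ∈ G)
    -- G is closed under rdfs9 (subclass usage)
    (h9 : ∀ c d s, (c, subClassOf, d) ∈ G → (s, rdfType, c) ∈ G → (s, rdfType, d) ∈ G) :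
    -- (i) subclass semantic condition
    (∀ c d, (c, subClassOf, d) ∈ G → c ∈ vocabC rdfType rdfsClass G →
        d ∈ vocabC rdfType rdfsClass G →
        canonClassExt rdfType G c ⊆ canonClassExt rdfType G d) ∧
    -- (ii) subproperty semantic condition
    (∀ p q, (p, subPropertyOf, q) ∈ G → p ∈ vocabP rdfType rdfProperty G →
        q ∈ vocabP rdfType rdfProperty G →
        canonPropExt G p ⊆ canonPropExt G q) ∧
    -- (iii) domain semantic condition
    (∀ p c, (p, rdfsDomain, c) ∈ G → p ∈ vocabP rdfType rdfProperty G →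
        c ∈ vocabC rdfType rdfsClass G →
        ∀ s o, (s, o) ∈ canonPropExt G p → s ∈ canonClassExt rdfType G c) ∧
    -- (iv) range semantic condition
    (∀ p c, (p, rdfsRange, c) ∈ G → p ∈ vocabP rdfType rdfProperty G →
        c ∈ vocabC rdfType rdfsClass G →
        ∀ s o, (s, o) ∈ canonPropExt G p → o ∈ canonClassExt rdfType G c) := by
  refine ⟨?_, ?_, ?_, ?_⟩
  · intro c d h _ _ s hs; exact h9 c d s h hs
  · intro p q h _ _ so hso; exact h7 p q so.1 so.2 h hso
  · intro p c h _ _ s o hso; exact h2 p c s o h hso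
  · intro p c h _ _ s o hso; exact h3 p c s o h hso
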